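/- Let G be a bipartite graph without isolated vertices with bipartition A ∪ B, and let S = (v_1, ..., v_{2k}) be a Grundy total dominating sequence of G (i.e., a total dominating sequence of maximum length 2k = γ_gr^t(G)). Then the underlying vertex set of S contains exactly k vertices of A and exactly k vertices of B. -/

import Mathlib

/-!
Pair each vertex `v_i` of a legal sequence with a footprint `w_i`: a neighbor of `v_i` that no
earlier vertex dominates. The condition "`v_j` is not adjacent to `w_i` for `j < i`" is symmetric,
so `w_m, …, w_1` is again legal, footprinted by `v_m, …, v_1`. In a bipartite graph, keep only the
vertices of a legal sequence lying in `A`; since `A` is independent, no `v_j` dominates any `v_i`,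
hence `v_1, …, v_m, w_m, …, w_1` is legal of length `2m`. Every legal sequence extends to a total
dominating one, so twice the number of `A`-vertices, and likewise of `B`-vertices, of a total
dominating sequence is at most `γ_gr^t(G)`; for a Grundy sequence the two numbers add up to
`γ_gr^t(G)`, forcing equality.
-/

/-- `S` is a total dominating set of `G`: every vertex has a neighbor in `S`. -/
def IsTotalDomSet {V : Type*} (G : SimpleGraph V) (S : Set V) : Prop :=
  ∀ v : V, ∃ u ∈ S, G.Adj v u

/-- `l` is a legal sequence of `G`: the vertices are distinct and every vertex
(except possibly the first) totally dominates a vertex not totally dominated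
by the previous vertices. -/
def IsLegalSeq {V : Type*} (G : SimpleGraph V) (l : List V) : Prop :=
  l.Nodup ∧ ∀ i : Fin l.length, 0 < (i : ℕ) →
    ∃ w : V, G.Adj (l.get i) w ∧ ∀ j : Fin l.length, (j : ℕ) < (i : ℕ) → ¬ G.Adj (l.get j) w

/-- `l` is a total dominating sequence of `G`. -/
def IsTotalDomSeq {V : Type*} (G : SimpleGraph V) (l : List V) : Prop :=
  IsLegalSeq G l ∧ IsTotalDomSet G {v | v ∈ l}

/-- The Grundy total domination number of `G`: the maximum length of a total
dominating sequence. -/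
noncomputable def grundyTotalDomNum {V : Type*} (G : SimpleGraph V) : ℕ :=
  sSup {k : ℕ | ∃ l : List V, IsTotalDomSeq G l ∧ l.length = k}

/-- The total domination number of `G`: the minimum cardinality of a total
dominating set. -/
noncomputable def totalDomNum {V : Type*} (G : SimpleGraph V) : ℕ :=
  sInf {k : ℕ | ∃ S : Set V, IsTotalDomSet G S ∧ S.ncard = k}

/-- `A`, `B` is a bipartition of `G`. -/
def IsBipartitionOf {V : Type*} (G : SimpleGraph V) (A B : Set V) : Prop :=
  (∀ v : V, (v ∈ A ∧ v ∉ B) ∨ (v ∈ B ∧ v ∉ A)) ∧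
  ∀ ⦃u v : V⦄, G.Adj u v → (u ∈ A ∧ v ∈ B) ∨ (u ∈ B ∧ v ∈ A)

/-- `G` has no false twins: distinct vertices have distinct open neighborhoods. -/
def FalseTwinFree {V : Type*} (G : SimpleGraph V) : Prop :=
  ∀ u v : V, u ≠ v → G.neighborSet u ≠ G.neighborSet v

/-- `G` has no isolated vertices. -/
def NoIsolatedVerts {V : Type*} (G : SimpleGraph V) : Prop :=
  ∀ v : V, ∃ u : V, G.Adj v u

section Footprints

variable {V : Type*} {G : SimpleGraph V}

/-- Each entry `(v, w)` of `P` pairs a vertex `v` of a sequence with a footprint `w`: a neighbor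
of `v` that no earlier vertex of the sequence dominates. -/
def IsFootprinting (G : SimpleGraph V) (P : List (V × V)) : Prop :=
  (∀ p ∈ P, G.Adj p.1 p.2) ∧ P.Pairwise fun p q => ¬ G.Adj p.1 q.2

theorem IsFootprinting.isLegalSeq {P : List (V × V)} (hP : IsFootprinting G P) :
    IsLegalSeq G (P.map Prod.fst) := by
  refine ⟨List.pairwise_map.2 <| hP.2.imp_of_mem fun {p q} _ hq hpq hfst => ?_, fun i _ => ?_⟩
  · exact hpq (hfst ▸ hP.1 q hq)
  · have hi : (i : ℕ) < P.length := by simpa using i.2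
    refine ⟨P[(i : ℕ)].2, by simpa using hP.1 _ (List.getElem_mem hi), fun j hj => ?_⟩
    simpa using List.pairwise_iff_getElem.1 hP.2 j i (by simpa using j.2) hi hj

theorem IsLegalSeq.exists_isFootprinting (hiso : NoIsolatedVerts G) {l : List V}
    (hl : IsLegalSeq G l) : ∃ P, IsFootprinting G P ∧ P.map Prod.fst = l := by
  have hfoot : ∀ i : Fin l.length, ∃ w, G.Adj (l.get i) w ∧
      ∀ j : Fin l.length, j < i → ¬ G.Adj (l.get j) w := by
    intro i
    by_cases hi : 0 < (i : ℕ)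
    · exact hl.2 i hi
    · obtain ⟨w, hw⟩ := hiso (l.get i)
      exact ⟨w, hw, fun j hj => absurd hj (by omega)⟩
  choose w hadj hnew using hfoot
  refine ⟨List.ofFn fun i => (l.get i, w i), ⟨?_, ?_⟩, ?_⟩
  · simpa [List.mem_ofFn] using hadj
  · exact List.pairwise_ofFn.2 fun i j hij => hnew j i hij
  · simp [List.map_ofFn, Function.comp_def, List.ofFn_getElem]

theorem IsFootprinting.sublist {P Q : List (V × V)} (hP : IsFootprinting G P) (h : Q.Sublist P) :
    IsFootprinting G Q :=
  ⟨fun p hp => hP.1 p (h.subset hp), hP.2.sublist h⟩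

theorem IsFootprinting.append {P Q : List (V × V)} (hP : IsFootprinting G P)
    (hQ : IsFootprinting G Q) (hPQ : ∀ p ∈ P, ∀ q ∈ Q, ¬ G.Adj p.1 q.2) :
    IsFootprinting G (P ++ Q) :=
  ⟨by simpa [or_imp, forall_and] using And.intro hP.1 hQ.1,
    List.pairwise_append.2 ⟨hP.2, hQ.2, hPQ⟩⟩

theorem IsFootprinting.reverse_map_swap {P : List (V × V)} (hP : IsFootprinting G P) :
    IsFootprinting G (P.map Prod.swap).reverse := by
  refine ⟨?_, ?_⟩
  · simp only [List.mem_reverse, List.mem_map]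
    rintro _ ⟨p, hp, rfl⟩
    exact (hP.1 p hp).symm
  · rw [List.pairwise_reverse, List.pairwise_map]
    exact hP.2.imp fun h h' => h h'.symm

theorem IsFootprinting.append_reverse_map_swap {P : List (V × V)} (hP : IsFootprinting G P)
    (hind : ∀ p ∈ P, ∀ q ∈ P, ¬ G.Adj p.1 q.1) :
    IsFootprinting G (P ++ (P.map Prod.swap).reverse) :=
  hP.append hP.reverse_map_swap <| by
    simp only [List.mem_reverse, List.mem_map]
    rintro p hp _ ⟨q, hq, rfl⟩
    exact hind p hp q hq

end Footprints

theorem List.Nodup.ncard_setOf_mem {V : Type*} {l : List V} (hl : l.Nodup) :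
    {v | v ∈ l}.ncard = l.length := by
  classical
  rw [← List.toFinset_card_of_nodup hl, ← Set.ncard_coe_finset]
  simp

section GrundyBound

variable {V : Type*} {G : SimpleGraph V} {l : List V}

theorem IsLegalSeq.append_singleton (hiso : NoIsolatedVerts G) (hl : IsLegalSeq G l) {u v : V}
    (huv : G.Adj u v) (hv : ∀ x ∈ l, ¬ G.Adj x v) : IsLegalSeq G (l ++ [u]) := by
  obtain ⟨P, hP, rfl⟩ := hl.exists_isFootprinting hiso
  have hu : IsFootprinting G [(u, v)] := ⟨by simpa using huv, List.pairwise_singleton _ _⟩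
  have hPu : ∀ p ∈ P, ∀ q ∈ [(u, v)], ¬ G.Adj p.1 q.2 := by
    simpa using fun (p : V × V) hp => hv p.1 (List.mem_map_of_mem hp)
  simpa using (hP.append hu hPu).isLegalSeq

theorem IsLegalSeq.isTotalDomSeq_of_forall_length_le (hiso : NoIsolatedVerts G)
    (hl : IsLegalSeq G l) (hmax : ∀ l', IsLegalSeq G l' → l'.length ≤ l.length) :
    IsTotalDomSeq G l := by
  refine ⟨hl, fun v => ?_⟩
  by_contra! hv
  obtain ⟨u, hu⟩ := hiso v
  simpa using hmax _ (hl.append_singleton hiso hu.symm fun x hx h => hv x hx h.symm)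

theorem IsLegalSeq.length_le_grundyTotalDomNum [Fintype V] (hiso : NoIsolatedVerts G)
    (hl : IsLegalSeq G l) : l.length ≤ grundyTotalDomNum G := by
  set S : Set ℕ := {n | ∃ l : List V, IsLegalSeq G l ∧ l.length = n}
  have hbdd : BddAbove S := ⟨Fintype.card V, by rintro _ ⟨l, hl, rfl⟩; exact hl.1.length_le_card⟩
  obtain ⟨lmax, hlmax, hlen⟩ := Nat.sSup_mem (s := S) ⟨_, l, hl, rfl⟩ hbdd
  have htds : IsTotalDomSeq G lmax := hlmax.isTotalDomSeq_of_forall_length_le hiso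
    fun l' hl' => hlen ▸ le_csSup hbdd ⟨l', hl', rfl⟩
  calc l.length ≤ sSup S := le_csSup hbdd ⟨l, hl, rfl⟩
    _ = lmax.length := hlen.symm
    _ ≤ grundyTotalDomNum G :=
      le_csSup (hbdd.mono fun _ ⟨l', hl', h⟩ => (⟨l', hl'.1, h⟩ : ∃ l' : List V, _))
        ⟨lmax, htds, rfl⟩

end GrundyBound

namespace IsBipartitionOf

variable {V : Type*} {G : SimpleGraph V} {A B : Set V}

theorem symm (h : IsBipartitionOf G A B) : IsBipartitionOf G B A :=
  ⟨fun v => (h.1 v).symm, fun _ _ hadj => (h.2 hadj).symm⟩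

theorem not_adj_of_mem_left (h : IsBipartitionOf G A B) {u v : V} (hu : u ∈ A) (hv : v ∈ A) :
    ¬ G.Adj u v := fun hadj => by
  rcases h.1 u with _ | _ <;> rcases h.1 v with _ | _ <;> rcases h.2 hadj with _ | _ <;> tauto

theorem ncard_inter_add_ncard_inter (h : IsBipartitionOf G A B) {s : Set V} (hs : s.Finite) :
    (s ∩ A).ncard + (s ∩ B).ncard = s.ncard := by
  have hB : s ∩ B = s \ A := by
    ext v
    rcases h.1 v with _ | _ <;> simp_all
  rw [hB, Set.ncard_inter_add_ncard_sdiff_eq_ncard _ _ hs]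

theorem two_mul_ncard_inter_le_grundyTotalDomNum [Fintype V] (h : IsBipartitionOf G A B)
    (hiso : NoIsolatedVerts G) {l : List V} (hl : IsLegalSeq G l) :
    2 * ({v | v ∈ l} ∩ A).ncard ≤ grundyTotalDomNum G := by
  classical
  obtain ⟨P, hP, rfl⟩ := hl.exists_isFootprinting hiso
  set PA := P.filter (·.1 ∈ A)
  have hPA : IsFootprinting G PA := hP.sublist List.filter_sublist
  have hmemA : ∀ p ∈ PA, p.1 ∈ A := fun p hp => by simpa using (List.mem_filter.1 hp).2
  have hdouble := (hPA.append_reverse_map_swap fun p hp q hq =>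
    h.not_adj_of_mem_left (hmemA p hp) (hmemA q hq)).isLegalSeq
  have hset : {v | v ∈ P.map Prod.fst} ∩ A = {v | v ∈ PA.map Prod.fst} := by
    ext v
    simp [PA]
  calc 2 * ({v | v ∈ P.map Prod.fst} ∩ A).ncard
      = ((PA ++ (PA.map Prod.swap).reverse).map Prod.fst).length := by
        rw [hset, hPA.isLegalSeq.1.ncard_setOf_mem]
        simp [two_mul]
    _ ≤ grundyTotalDomNum G := hdouble.length_le_grundyTotalDomNum hiso

end IsBipartitionOf

/-- In a bipartite graph without isolated vertices with bipartition
`A ∪ B`, any Grundy total dominating sequence (a total dominating sequence of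
maximum length `2 * k`) contains exactly `k` vertices of `A` and `k` of `B`. -/
theorem grundy_total_dom_seq_balanced {V : Type*} [Fintype V] (G : SimpleGraph V)
    (A B : Set V) (hbip : IsBipartitionOf G A B) (hiso : NoIsolatedVerts G)
    (k : ℕ) (l : List V) (hl : IsTotalDomSeq G l)
    (hlen : l.length = 2 * k) (hmax : l.length = grundyTotalDomNum G) :
    ({v | v ∈ l} ∩ A).ncard = k ∧ ({v | v ∈ l} ∩ B).ncard = k := by
  have hA := hbip.two_mul_ncard_inter_le_grundyTotalDomNum hiso hl.1
  have hB := hbip.symm.two_mul_ncard_inter_le_grundyTotalDomNum hiso hl.1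
  have hsum := hbip.ncard_inter_add_ncard_inter (Set.toFinite {v | v ∈ l})
  rw [hl.1.1.ncard_setOf_mem] at hsum
  omega
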